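/- arXiv:1105.5777 — 2 statements merged into one kernel-verified Lean document; each statement's English description precedes it below -/
import Mathlib

section
/- For all complex numbers x, y with x ≠ 0, y ≠ 0 and x + y ≠ 0, the Yang R-matrix satisfies the Yang–Baxter equation R₁₂(x) R₁₃(x+y) R₂₃(y) = R₂₃(y) R₁₃(x+y) R₁₂(x) as operators on (ℂⁿ)^{⊗3}. -/
noncomputable section
open scoped Kronecker
open Matrix

/-- Square matrices acting on the tensor power `(ℂⁿ)^{⊗ι}`, modelled on the
function basis `ι → Fin n`. -/
abbrev TMat (ι : Type) (n : ℕ) := Matrix (ι → Fin n) (ι → Fin n) ℂ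

/-- The matrix units `E_{ij}` of `End(ℂⁿ)`. -/
def matE (n : ℕ) (i j : Fin n) : Matrix (Fin n) (Fin n) ℂ := Matrix.single i j 1

/-- The flip `P = Σ E_{ij} ⊗ E_{ji}` on `ℂⁿ ⊗ ℂⁿ`. -/
def flipP (n : ℕ) : Matrix (Fin n × Fin n) (Fin n × Fin n) ℂ :=
  ∑ i : Fin n, ∑ j : Fin n, matE n i j ⊗ₖ matE n j i

/-- `P̄ = Σ E_{ij} ⊗ E_{ij}` on `ℂⁿ ⊗ ℂⁿ`. -/
def PbarM (n : ℕ) : Matrix (Fin n × Fin n) (Fin n × Fin n) ℂ :=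
  ∑ i : Fin n, ∑ j : Fin n, matE n i j ⊗ₖ matE n i j

/-- The conjugate `X̃ = G⁻¹ Xᵀ G` of `X` relative to the bilinear form with
Gram matrix `G`, i.e. `⟨X u, v⟩ = ⟨u, X̃ v⟩` where `⟨u, v⟩ = uᵀ G v`. -/
def conjF {n : ℕ} (G X : Matrix (Fin n) (Fin n) ℂ) : Matrix (Fin n) (Fin n) ℂ :=
  G⁻¹ * Xᵀ * G

/-- `P̃ = Σ Ẽ_{ij} ⊗ E_{ji}`. -/
def PtilM (n : ℕ) (G : Matrix (Fin n) (Fin n) ℂ) : Matrix (Fin n × Fin n) (Fin n × Fin n) ℂ :=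
  ∑ i : Fin n, ∑ j : Fin n, conjF G (matE n i j) ⊗ₖ matE n j i

/-- `P̂ = Σ Ẽ_{ij} ⊗ E_{ij}`. -/
def PhatM (n : ℕ) (G : Matrix (Fin n) (Fin n) ℂ) : Matrix (Fin n × Fin n) (Fin n × Fin n) ℂ :=
  ∑ i : Fin n, ∑ j : Fin n, conjF G (matE n i j) ⊗ₖ matE n i j

/-- The Yang R-matrix `R(x) = 1 − P x⁻¹`. -/
def Rm (n : ℕ) (x : ℂ) : Matrix (Fin n × Fin n) (Fin n × Fin n) ℂ := 1 - x⁻¹ • flipP n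

/-- `R̄(x) = 1 − P̄ x⁻¹`. -/
def RbarM (n : ℕ) (x : ℂ) : Matrix (Fin n × Fin n) (Fin n × Fin n) ℂ := 1 - x⁻¹ • PbarM n

/-- `R̃(x) = 1 − P̃ x⁻¹`. -/
def RtilM (n : ℕ) (G : Matrix (Fin n) (Fin n) ℂ) (x : ℂ) :
    Matrix (Fin n × Fin n) (Fin n × Fin n) ℂ := 1 - x⁻¹ • PtilM n G

/-- `R̂(x) = 1 − P̂ x⁻¹`. -/
def RhatM (n : ℕ) (G : Matrix (Fin n) (Fin n) ℂ) (x : ℂ) :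
    Matrix (Fin n × Fin n) (Fin n × Fin n) ℂ := 1 - x⁻¹ • PhatM n G

/-- `Z_{ij}` : the operator on a tensor power of `ℂⁿ` acting as the two-factor
operator `Z` in the `i`-th and `j`-th tensor factors and as the identity elsewhere. -/
def lift2 {n : ℕ} {ι : Type} [Fintype ι] [DecidableEq ι] (i j : ι)
    (Z : Matrix (Fin n × Fin n) (Fin n × Fin n) ℂ) : TMat ι n :=
  fun f g => Z (f i, f j) (g i, g j) *
    ∏ p : ι, if p = i ∨ p = j then 1 else (if f p = g p then 1 else 0)

/-!
Each `R_{ij}(x) = 1 - x⁻¹ s_{ij}`, where `s_{ij}` is the permutation matrix exchanging the tensor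
factors `i` and `j`. The transpositions `a = s₁₂`, `c = s₂₃` are involutions satisfying the braid
relation `a c a = c a c`, and `s₁₃ = a c a`; these relations alone imply the Yang–Baxter equation.
Expanding both sides, the cubic terms are both `s₁₃`, every quadratic term is `a c` or `c a`, and
their coefficients agree because `1 / (x (x + y)) + 1 / ((x + y) y) = 1 / (x y)`.
-/

theorem yangBaxter_of_braid {K M : Type*} [Field K] [Ring M] [Algebra K M] {a c : M}
    (ha : a * a = 1) (hc : c * c = 1) (hac : a * c * a = c * a * c) {x y : K}
    (hx : x ≠ 0) (hy : y ≠ 0) (hxy : x + y ≠ 0) :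
    (1 - x⁻¹ • a) * (1 - (x + y)⁻¹ • (a * c * a)) * (1 - y⁻¹ • c)
      = (1 - y⁻¹ • c) * (1 - (x + y)⁻¹ • (a * c * a)) * (1 - x⁻¹ • a) := by
  have hab : a * (a * c * a) = c * a := by rw [← mul_assoc, ← mul_assoc, ha, one_mul]
  have hba : a * c * a * a = a * c := by rw [mul_assoc, ha, mul_one]
  have hbc : a * c * a * c = c * a := by rw [hac, mul_assoc, mul_assoc, hc, mul_one]
  have hcb : c * (a * c * a) = a * c := by rw [hac, ← mul_assoc, ← mul_assoc, hc, one_mul]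
  simp only [mul_sub, sub_mul, one_mul, mul_one, smul_mul_assoc, mul_smul_comm,
    hab, hba, hbc, hcb, ← hac]
  match_scalars <;> field_simp <;> ring

open Equiv

section TensorFactors

variable {ι : Type} [Fintype ι] [DecidableEq ι] {n : ℕ}

variable (ι n) in
def permuteFactors : Perm ι →* TMat ι n :=
  Matrix.permMatrixHom.comp
    { toFun := fun σ => σ.arrowCongr (Equiv.refl (Fin n))
      map_one' := rfl
      map_mul' := fun _ _ => rfl }

lemma permuteFactors_apply (σ : Perm ι) (f g : ι → Fin n) :
    permuteFactors ι n σ f g = if f ∘ σ = g then 1 else 0 := by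
  simp [permuteFactors, PEquiv.toMatrix_apply]
  rfl

lemma permuteFactors_swap_mul_self (i j : ι) :
    permuteFactors ι n (swap i j) * permuteFactors ι n (swap i j) = 1 := by
  rw [← map_mul, Equiv.swap_mul_self, map_one]

omit [Fintype ι] in
lemma funext_iff_pair {α : Type*} {f g : ι → α} (i j : ι) :
    f = g ↔ f i = g i ∧ f j = g j ∧ ∀ p, p ≠ i → p ≠ j → f p = g p := by
  refine ⟨fun h => by simp [h], fun ⟨hi, hj, h⟩ => funext fun p => ?_⟩
  by_cases hpi : p = i
  · rwa [hpi]
  by_cases hpj : p = j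
  · rwa [hpj]
  exact h p hpi hpj

omit [Fintype ι] in
lemma comp_swap_eq_iff {α : Type*} {f g : ι → α} (i j : ι) :
    f ∘ swap i j = g ↔ f i = g j ∧ f j = g i ∧ ∀ p, p ≠ i → p ≠ j → f p = g p := by
  rw [funext_iff_pair i j, and_left_comm]
  simp +contextual [swap_apply_of_ne_of_ne]

lemma lift2_apply (i j : ι) (Z : Matrix (Fin n × Fin n) (Fin n × Fin n) ℂ) (f g : ι → Fin n) :
    lift2 i j Z f g = Z (f i, f j) (g i, g j) *
      if ∀ p, p ≠ i → p ≠ j → f p = g p then 1 else 0 := by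
  simp only [lift2, ← ite_or]
  rw [Finset.prod_boole]
  simp [or_iff_not_imp_left]

lemma lift2_sub (i j : ι) (Z W : Matrix (Fin n × Fin n) (Fin n × Fin n) ℂ) :
    lift2 i j (Z - W) = lift2 i j Z - lift2 i j W := by
  ext f g
  simp [lift2, sub_mul]

lemma lift2_smul (i j : ι) (s : ℂ) (Z : Matrix (Fin n × Fin n) (Fin n × Fin n) ℂ) :
    lift2 i j (s • Z) = s • lift2 i j Z := by
  ext f g
  simp [lift2, mul_assoc]

lemma lift2_one (i j : ι) : lift2 i j (1 : Matrix (Fin n × Fin n) (Fin n × Fin n) ℂ) = 1 := by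
  ext f g
  simp only [lift2_apply, Matrix.one_apply, Prod.mk.injEq, ite_zero_mul_ite_zero, mul_one,
    and_assoc, funext_iff_pair i j]

omit [Fintype ι] [DecidableEq ι] in
lemma flipP_apply (a b c d : Fin n) :
    flipP n (a, b) (c, d) = if a = d ∧ b = c then 1 else 0 := by
  simp [flipP, matE, Matrix.sum_apply, Matrix.single_apply, ite_and, eq_comm]

lemma lift2_flipP (i j : ι) : lift2 i j (flipP n) = permuteFactors ι n (swap i j) := by
  ext f g
  simp only [lift2_apply, flipP_apply, permuteFactors_apply, ite_zero_mul_ite_zero, mul_one,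
    comp_swap_eq_iff i j, and_assoc]

lemma lift2_Rm (i j : ι) (x : ℂ) :
    lift2 i j (Rm n x) = 1 - x⁻¹ • permuteFactors ι n (swap i j) := by
  rw [Rm, lift2_sub, lift2_one, lift2_smul, lift2_flipP]

end TensorFactors

theorem stmt0_general (n : ℕ) (x y : ℂ) (hx : x ≠ 0) (hy : y ≠ 0) (hxy : x + y ≠ 0) :
    lift2 (0 : Fin 3) 1 (Rm n x) * lift2 (0 : Fin 3) 2 (Rm n (x + y)) *
      lift2 (1 : Fin 3) 2 (Rm n y)
  = lift2 (1 : Fin 3) 2 (Rm n y) * lift2 (0 : Fin 3) 2 (Rm n (x + y)) *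
      lift2 (0 : Fin 3) 1 (Rm n x) := by
  have h02 : permuteFactors (Fin 3) n (swap 0 2)
      = permuteFactors (Fin 3) n (swap 0 1) * permuteFactors (Fin 3) n (swap 1 2) *
          permuteFactors (Fin 3) n (swap 0 1) := by
    rw [← map_mul, ← map_mul]
    congr 1
    decide
  have hbraid : permuteFactors (Fin 3) n (swap 0 1) * permuteFactors (Fin 3) n (swap 1 2) *
        permuteFactors (Fin 3) n (swap 0 1)
      = permuteFactors (Fin 3) n (swap 1 2) * permuteFactors (Fin 3) n (swap 0 1) *
          permuteFactors (Fin 3) n (swap 1 2) := by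
    rw [← map_mul, ← map_mul, ← map_mul, ← map_mul]
    congr 1
    decide
  rw [lift2_Rm, lift2_Rm, lift2_Rm, h02]
  exact yangBaxter_of_braid (permuteFactors_swap_mul_self 0 1)
    (permuteFactors_swap_mul_self 1 2) hbraid hx hy hxy

/-- The Yang–Baxter equation `R₁₂(x) R₁₃(x+y) R₂₃(y) = R₂₃(y) R₁₃(x+y) R₁₂(x)`
on `(ℂⁿ)^{⊗3}`. -/
theorem stmt0 (n : ℕ) (hn : 1 ≤ n) (x y : ℂ) (hx : x ≠ 0) (hy : y ≠ 0) (hxy : x + y ≠ 0) :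
    lift2 (0 : Fin 3) 1 (Rm n x) * lift2 (0 : Fin 3) 2 (Rm n (x + y)) *
      lift2 (1 : Fin 3) 2 (Rm n y)
  = lift2 (1 : Fin 3) 2 (Rm n y) * lift2 (0 : Fin 3) 2 (Rm n (x + y)) *
      lift2 (0 : Fin 3) 1 (Rm n x) :=
  stmt0_general n x y hx hy hxy
end
end

section
/- Suppose μ₁, …, μ_m ∈ ℂ satisfy μ_a − μ_b ∉ ℤ for all a ≠ b, and put λ_a = μ_a + ν_a. Then the vector φ_{ν₁} ⊗ ⋯ ⊗ φ_{ν_m} ∈ (ℂⁿ)^{⊗N} is an eigenvector of B(μ) with eigenvalue ∏_{1 ≤ a < b ≤ m} c_{ab}, where c_{ab} = (λ_a − λ_b + ρ_a − ρ_b + ν_b)/(μ_a − μ_b + ρ_a − ρ_b) if ν_a ≤ ν_b, and c_{ab} = (λ_a − λ_b + ρ_a − ρ_b + ν_b)/(λ_a − λ_b + ρ_a − ρ_b) if ν_a ≥ ν_b. -/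
noncomputable section
open scoped Kronecker
open Matrix

/-- The operator `P_σ` permuting the tensor factors of `(ℂⁿ)^{⊗k}` according to `σ`. -/
def permMat (n k : ℕ) (σ : Equiv.Perm (Fin k)) : TMat (Fin k) n :=
  fun f g => if f ∘ σ = g then 1 else 0

/-- The normalized antisymmetrizer `A_k = (1/k!) Σ_σ sgn(σ) P_σ` on `(ℂⁿ)^{⊗k}`. -/
def antisym (n k : ℕ) : TMat (Fin k) n :=
  (k.factorial : ℂ)⁻¹ • ∑ σ : Equiv.Perm (Fin k), (((Equiv.Perm.sign σ : ℤ) : ℂ)) • permMat n k σ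

/-- Positions `1, …, N` of the sequence split into consecutive segments of
lengths `ν₁, …, ν_m`: the position `⟨a, i⟩` is the `(i+1)`-st element of the
`(a+1)`-st segment; the sequence order is the lexicographic order. -/
abbrev Pos (m : ℕ) (ν : Fin m → ℕ) : Type := (a : Fin m) × Fin (ν a)

/-- The positions `1, …, N` in their sequence order. -/
def posList (m : ℕ) (ν : Fin m → ℕ) : List (Pos m ν) :=
  (List.finRange m).flatMap (fun a => (List.finRange (ν a)).map (fun i => ⟨a, i⟩))

/-- The sequence `1', …, N'`: segments in reversed order, order within each
segment unchanged. -/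
def posListRev (m : ℕ) (ν : Fin m → ℕ) : List (Pos m ν) :=
  (List.finRange m).reverse.flatMap (fun a => (List.finRange (ν a)).map (fun i => ⟨a, i⟩))

/-- The spectral parameter `x_p = μ_a + ρ_a + 1/2 + ν_a − i` for `p` the `i`-th
element (1-based) of the `a`-th segment. -/
def xPos (m : ℕ) (ν : Fin m → ℕ) (μ ρ : Fin m → ℂ) (p : Pos m ν) : ℂ :=
  μ p.1 + ρ p.1 + 1/2 + (ν p.1 : ℂ) - ((p.2 : ℕ) : ℂ) - 1

/-- The pairs `(p, q)`, `p < q` in different segments, ordered so that `(p,q)`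
precedes `(r,s)` if `p < r`, or `p = r` and `q` precedes `s` in the sequence
`1'', …, N''` (segments in order, reversed within each segment). -/
def pairsB (m : ℕ) (ν : Fin m → ℕ) : List (Pos m ν × Pos m ν) :=
  (posList m ν).flatMap (fun p =>
    ((List.finRange m).filter (fun b => decide (p.1 < b))).flatMap (fun b =>
      ((List.finRange (ν b)).reverse.map (fun j => (p, (⟨b, j⟩ : Pos m ν))))))

/-- `B(μ) = ∏→_{(p,q)} R_{pq}(x_q − x_p)`, the ordered product (factors
multiplied left to right) over pairs `p < q` in different segments. -/
def Bop (n m : ℕ) (ν : Fin m → ℕ) (μ ρ : Fin m → ℂ) : TMat (Pos m ν) n :=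
  ((pairsB m ν).map (fun pq =>
    lift2 pq.1 pq.2 (Rm n (xPos m ν μ ρ pq.2 - xPos m ν μ ρ pq.1)))).prod

/-- The vector `φ_{ν₁} ⊗ ⋯ ⊗ φ_{ν_m}` where `φ_k = A_k(e₁ ⊗ ⋯ ⊗ e_k)`. -/
def phiSeg (n m : ℕ) (hn : 0 < n) (ν : Fin m → ℕ) : (Pos m ν → Fin n) → ℂ :=
  fun g => ∏ a : Fin m, antisym n (ν a) (fun i => g ⟨a, i⟩)
    (fun i => ⟨(i : ℕ) % n, Nat.mod_lt _ hn⟩)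

/-- Labels of the half-sum of positive roots of `gl_m`: `ρ_a = m/2 − a + 1/2`
(`a` here 0-based). -/
def rhoGL (m : ℕ) : Fin m → ℂ := fun a => (m : ℂ) / 2 - ((a : ℕ) : ℂ) - 1/2

/-!
Factors of `B(μ)` acting on disjoint pairs of sites commute, so `B(μ)` is the ordered product, over
segments `a < b`, of the blocks `D_{ab} = ∏_i ∏_j R_{(a,i),(b,j)}`. On a vector antisymmetric in the
sites `q₀, q₁, …` the fused column `R_{pq₀}(c) R_{pq₁}(c+1) ⋯` acts as `1 − c⁻¹ ∑_k P_{pq_k}`, and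
`∑_k P_{pq_k} φ = φ` as soon as, in every configuration supporting `φ`, the value at `p` recurs
among the `q_k`. For `ν_a ≤ ν_b` this makes every column of `D_{ab}` (fixed `(a,i)`) act on `φ` by a
scalar; for `ν_a ≥ ν_b` the same holds for the rows (fixed `(b,j)`) once the two products are
interchanged. The scalars telescope to `c_{ab}`, and `μ_a − μ_b ∉ ℤ` keeps every spectral parameter
away from `0`.
-/

theorem Finset.prod_range_div_of_ne_zero {K : Type*} [CommGroupWithZero K] (f : ℕ → K)
    (hf : ∀ i, f i ≠ 0) (N : ℕ) : ∏ i ∈ Finset.range N, f (i + 1) / f i = f N / f 0 := by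
  simpa using congrArg Units.val (Finset.prod_range_div (fun i => Units.mk0 (f i) (hf i)) N)

theorem Finset.prod_range_div_of_ne_zero' {K : Type*} [CommGroupWithZero K] (f : ℕ → K)
    (hf : ∀ i, f i ≠ 0) (N : ℕ) : ∏ i ∈ Finset.range N, f i / f (i + 1) = f 0 / f N := by
  simpa using congrArg Units.val (Finset.prod_range_div' (fun i => Units.mk0 (f i) (hf i)) N)

namespace List

variable {α β M : Type*} [Monoid M]

theorem prod_map_flatMap (l : List α) (g : α → List β) (F : β → M) :
    ((l.flatMap g).map F).prod = (l.map fun a => ((g a).map F).prod).prod := by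
  simp [flatMap_def, prod_flatten, map_flatten, Function.comp_def]

theorem prod_map_mul_prod_map_of_commute (l : List β) (f g : β → M) (hl : l.Nodup)
    (h : ∀ b ∈ l, ∀ b' ∈ l, b ≠ b' → Commute (f b) (g b')) :
    (l.map f).prod * (l.map g).prod = (l.map fun b => f b * g b).prod := by
  induction l with
  | nil => simp
  | cons b t ih =>
    obtain ⟨hbt, ht⟩ := nodup_cons.mp hl
    have hcomm : Commute (t.map f).prod (g b) :=
      Commute.list_prod_left _ _ fun z hz => by
        obtain ⟨b', hb', rfl⟩ := mem_map.mp hz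
        exact h b' (mem_cons_of_mem _ hb') b mem_cons_self (ne_of_mem_of_not_mem hb' hbt)
    simp only [map_cons, prod_cons]
    rw [← ih ht fun b₁ h₁ b₂ h₂ => h b₁ (mem_cons_of_mem _ h₁) b₂ (mem_cons_of_mem _ h₂),
      mul_assoc, ← mul_assoc (t.map f).prod, hcomm.eq, mul_assoc, mul_assoc]

theorem prod_map_prod_map_comm (l₁ : List α) (l₂ : List β) (X : α → β → M)
    (h₁ : l₁.Nodup) (h₂ : l₂.Nodup)
    (h : ∀ a ∈ l₁, ∀ a' ∈ l₁, ∀ b ∈ l₂, ∀ b' ∈ l₂, a ≠ a' → b ≠ b' → Commute (X a b) (X a' b')) :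
    (l₁.map fun a => (l₂.map (X a)).prod).prod = (l₂.map fun b => (l₁.map (X · b)).prod).prod := by
  induction l₁ with
  | nil => simp
  | cons a t ih =>
    obtain ⟨hat, ht⟩ := nodup_cons.mp h₁
    simp only [map_cons, prod_cons]
    rw [ih ht fun a₁ h₁ a₂ h₂ => h a₁ (mem_cons_of_mem _ h₁) a₂ (mem_cons_of_mem _ h₂)]
    refine prod_map_mul_prod_map_of_commute l₂ _ _ h₂ fun b hb b' hb' hbb' => ?_
    refine Commute.list_prod_right _ _ fun z hz => ?_
    obtain ⟨a', ha', rfl⟩ := mem_map.mp hz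
    exact h a mem_cons_self a' (mem_cons_of_mem _ ha') b hb b' hb'
      (ne_of_mem_of_not_mem ha' hat).symm hbb'

end List

theorem Matrix.list_prod_mulVec_eq_smul {ι α R : Type*} [Fintype ι] [DecidableEq ι] [CommSemiring R]
    (v : ι → R) (L : List α) (M : α → Matrix ι ι R) (c : α → R)
    (h : ∀ x ∈ L, (M x).mulVec v = c x • v) :
    ((L.map M).prod).mulVec v = (L.map c).prod • v := by
  induction L with
  | nil => simp
  | cons x t ih =>
    simp only [List.map_cons, List.prod_cons]
    rw [← Matrix.mulVec_mulVec, ih fun y hy => h y (List.mem_cons_of_mem _ hy),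
      Matrix.mulVec_smul, h x List.mem_cons_self, smul_smul, mul_comm]

section SiteOperators

variable {n : ℕ} {ι : Type} [Fintype ι] [DecidableEq ι]

theorem lift2_mulVec_apply {p q : ι} (hpq : p ≠ q) (Z : Matrix (Fin n × Fin n) (Fin n × Fin n) ℂ)
    (v : (ι → Fin n) → ℂ) (f : ι → Fin n) :
    (lift2 p q Z).mulVec v f
      = ∑ a, ∑ b, Z (f p, f q) (a, b) * v (Function.update (Function.update f p a) q b) := by
  set u : Fin n × Fin n → ι → Fin n := fun ab => Function.update (Function.update f p ab.1) q ab.2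
  have hu : Function.Injective u := fun ab ab' h => Prod.ext
    (by simpa [u, hpq] using congrFun h p) (by simpa [u] using congrFun h q)
  have hoff : ∀ g : ι → Fin n, (∏ r, if r = p ∨ r = q then (1 : ℂ) else if f r = g r then 1 else 0)
      = if g ∈ Set.range u then 1 else 0 := by
    intro g
    by_cases hg : ∀ r, r ≠ p → r ≠ q → f r = g r
    · have hgu : u (g p, g q) = g := by
        funext r
        by_cases hrq : r = q
        · subst hrq; simp [u]
        by_cases hrp : r = p
        · subst hrp; simp [u, hrq]
        · simp [u, hrp, hrq, hg r hrp hrq]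
      rw [if_pos ⟨_, hgu⟩]
      exact Finset.prod_eq_one fun r _ => by
        by_cases hr : r = p ∨ r = q
        · simp [hr]
        · simp [hr, hg r (by tauto) (by tauto)]
    · push Not at hg
      obtain ⟨r, hrp, hrq, hr⟩ := hg
      rw [if_neg, Finset.prod_eq_zero (Finset.mem_univ r) (by simp [hrp, hrq, hr])]
      rintro ⟨ab, rfl⟩
      exact hr (by simp [u, hrp, hrq])
  rw [← Fintype.sum_prod_type', Matrix.mulVec, dotProduct]
  refine (Fintype.sum_of_injective u hu _ _ (fun g hg => ?_) fun ab => ?_).symm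
  · simp [lift2, hoff, hg]
  · simp [lift2, hoff, u, hpq]

theorem Rm_apply (x : ℂ) (a₁ a₂ b₁ b₂ : Fin n) :
    Rm n x (a₁, a₂) (b₁, b₂)
      = (if a₁ = b₁ ∧ a₂ = b₂ then 1 else 0) - x⁻¹ * if a₁ = b₂ ∧ a₂ = b₁ then 1 else 0 := by
  simp [Rm, flipP, matE, Matrix.one_apply, Matrix.sum_apply, Matrix.single_apply, ite_and,
    Finset.sum_ite_eq, eq_comm]

theorem lift2_Rm_mulVec {p q : ι} (hpq : p ≠ q) (x : ℂ) (v : (ι → Fin n) → ℂ) :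
    (lift2 p q (Rm n x)).mulVec v = fun f => v f - x⁻¹ * v (f ∘ Equiv.swap p q) := by
  funext f
  have hswap : Function.update (Function.update f p (f q)) q (f p) = f ∘ Equiv.swap p q := by
    funext r
    rcases eq_or_ne r q with rfl | hrq
    · simp
    rcases eq_or_ne r p with rfl | hrp
    · simp [hpq]
    · simp [hrq, hrp, Equiv.swap_apply_of_ne_of_ne hrp hrq]
  simp [lift2_mulVec_apply hpq, Rm_apply, sub_mul, Finset.sum_sub_distrib, ite_and, hswap]

theorem lift2_Rm_comm (p q : ι) (x : ℂ) : (lift2 p q (Rm n x) : TMat ι n) = lift2 q p (Rm n x) := by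
  rcases eq_or_ne p q with rfl | hpq
  · rfl
  rw [Matrix.ext_iff_mulVec]
  intro v
  rw [lift2_Rm_mulVec hpq, lift2_Rm_mulVec hpq.symm, Equiv.swap_comm]

theorem commute_lift2_Rm {p q r s : ι} (hpq : p ≠ q) (hrs : r ≠ s)
    (hpr : p ≠ r) (hps : p ≠ s) (hqr : q ≠ r) (hqs : q ≠ s) (x y : ℂ) :
    Commute (lift2 p q (Rm n x) : TMat ι n) (lift2 r s (Rm n y)) := by
  have hswap : ∀ f : ι → Fin n,
      (f ∘ Equiv.swap p q) ∘ Equiv.swap r s = (f ∘ Equiv.swap r s) ∘ Equiv.swap p q := by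
    intro f
    funext t
    simp only [Function.comp_apply, Equiv.swap_apply_def]
    split_ifs <;> simp_all
  rw [commute_iff_eq, Matrix.ext_iff_mulVec]
  intro v
  simp only [← Matrix.mulVec_mulVec, lift2_Rm_mulVec hpq, lift2_Rm_mulVec hrs, hswap]
  funext f
  ring

end SiteOperators

theorem Function.comp_swap_eq_self {ι α : Type*} [DecidableEq ι] {f : ι → α} {a b : ι}
    (h : f a = f b) : f ∘ Equiv.swap a b = f := by
  rw [Equiv.comp_swap_eq_update]
  simp [h]

theorem comp_swap_comp_swap {ι α : Type*} [DecidableEq ι] {f : ι → α} {p q r : ι} (hpq : p ≠ q)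
    (hpr : p ≠ r) (hqr : q ≠ r) :
    (f ∘ Equiv.swap p q) ∘ Equiv.swap p r = (f ∘ Equiv.swap p r) ∘ Equiv.swap q r := by
  funext x
  simp only [Function.comp_apply, Equiv.swap_apply_def]
  split_ifs <;> simp_all

section Antisymmetry

variable {ι α : Type*} [DecidableEq ι]

def IsAntisymmOn (S : Set ι) (v : (ι → α) → ℂ) : Prop :=
  ∀ q ∈ S, ∀ q' ∈ S, q ≠ q' → ∀ f, v (f ∘ Equiv.swap q q') = -v f

theorem IsAntisymmOn.mono {S T : Set ι} {v : (ι → α) → ℂ} (hv : IsAntisymmOn S v) (hTS : T ⊆ S) :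
    IsAntisymmOn T v :=
  fun q hq q' hq' => hv q (hTS hq) q' (hTS hq')

theorem IsAntisymmOn.apply_eq_zero {S : Set ι} {v : (ι → α) → ℂ} (hv : IsAntisymmOn S v)
    {q q' : ι} (hq : q ∈ S) (hq' : q' ∈ S) (hne : q ≠ q') {f : ι → α} (hf : f q = f q') :
    v f = 0 := by
  have h := hv q hq q' hq' hne f
  rwa [Function.comp_swap_eq_self hf, eq_neg_iff_add_eq_zero, ← two_mul, mul_eq_zero,
    or_iff_right two_ne_zero] at h

theorem sum_comp_swap_eq_self {p : ι} {s : Finset ι} (hp : p ∉ s)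
    {v : (ι → α) → ℂ} (hv : IsAntisymmOn s v)
    (hsupp : ∀ f, v f ≠ 0 → ∃ q ∈ s, f q = f p) (f : ι → α) :
    ∑ q ∈ s, v (f ∘ Equiv.swap p q) = v f := by
  have hne : ∀ {q}, q ∈ s → q ≠ p := fun hq h => hp (h ▸ hq)
  have hswap : ∀ {q r}, r ≠ p → r ≠ q → (f ∘ Equiv.swap p q) r = f r := fun hrp hrq => by
    simp [Equiv.swap_apply_of_ne_of_ne hrp hrq]
  by_cases hrep : ∃ q₀ ∈ s, f q₀ = f p
  -- only the term of `q₀` survives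
  · obtain ⟨q₀, hq₀, hf⟩ := hrep
    rw [Finset.sum_eq_single q₀ (fun q hq hqq₀ => ?_) (fun h => absurd hq₀ h),
      Function.comp_swap_eq_self hf.symm]
    refine hv.apply_eq_zero hq hq₀ hqq₀ ?_
    rw [hswap (hne hq₀) (Ne.symm hqq₀), hf]
    simp
  push Not at hrep
  have hf0 : v f = 0 := by
    by_contra h
    obtain ⟨q, hq, hfq⟩ := hsupp f h
    exact hrep q hq hfq
  rw [hf0]
  by_cases hcoll : ∃ q₁ ∈ s, ∃ q₂ ∈ s, q₁ ≠ q₂ ∧ f q₁ = f q₂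
  -- the terms of `q₁` and `q₂` cancel, all others vanish
  · obtain ⟨q₁, hq₁, q₂, hq₂, hq₁₂, hf⟩ := hcoll
    have hpair : f ∘ Equiv.swap p q₁ = (f ∘ Equiv.swap p q₂) ∘ Equiv.swap q₁ q₂ := by
      funext x
      simp only [Function.comp_apply, Equiv.swap_apply_def]
      have := hne hq₁
      have := hne hq₂
      split_ifs <;> simp_all
    rw [Finset.sum_eq_add q₁ q₂ hq₁₂ (fun q hq hq' => ?_) (fun h => absurd hq₁ h)
      (fun h => absurd hq₂ h), hpair, hv q₁ hq₁ q₂ hq₂ hq₁₂, neg_add_cancel]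
    refine hv.apply_eq_zero hq₁ hq₂ hq₁₂ ?_
    rw [hswap (hne hq₁) hq'.1.symm, hswap (hne hq₂) hq'.2.symm, hf]
  push Not at hcoll
  -- `f` is injective on `s` and misses `f p`, so no term is supported
  refine Finset.sum_eq_zero fun q hq => ?_
  by_contra h
  obtain ⟨r, hr, hfr⟩ := hsupp _ h
  rcases eq_or_ne r q with rfl | hrq
  · exact hrep r hr (by simpa using hfr.symm)
  · rw [hswap (hne hr) hrq] at hfr
    exact hcoll r hr q hq hrq (by simpa using hfr)

end Antisymmetry

section Fusion

variable {n : ℕ} {ι : Type} [Fintype ι] [DecidableEq ι]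

theorem list_prod_lift2_Rm_mulVec {p : ι} {qs : List ι} (hnd : qs.Nodup) (hp : p ∉ qs)
    {A : ι → ℂ} {c : ℂ} (hA : ∀ (k : ℕ) (hk : k < qs.length), A qs[k] = c + k)
    (hc : ∀ k : ℕ, c + k ≠ 0) {v : (ι → Fin n) → ℂ} (hv : IsAntisymmOn {q | q ∈ qs} v) :
    ((qs.map fun q => lift2 p q (Rm n (A q))).prod).mulVec v
      = fun f => v f - c⁻¹ * ∑ q ∈ qs.toFinset, v (f ∘ Equiv.swap p q) := by
  induction qs generalizing c with
  | nil => simp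
  | cons q t ih =>
    obtain ⟨hqt, ht⟩ := List.nodup_cons.mp hnd
    have hpq : p ≠ q := fun h => hp (h ▸ List.mem_cons_self)
    have hpt : p ∉ t := fun h => hp (List.mem_cons_of_mem _ h)
    have hc₀ : c ≠ 0 := by simpa using hc 0
    have hc₁ : c + 1 ≠ 0 := by simpa using hc 1
    have hAq : A q = c := by
      have h := hA 0 (by simp)
      rwa [List.getElem_cons_zero, Nat.cast_zero, add_zero] at h
    have hAt : ∀ (k : ℕ) (hk : k < t.length), A t[k] = (c + 1) + k := fun k hk => by
      rw [add_assoc, add_comm 1, ← Nat.cast_succ]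
      exact hA (k + 1) (by simpa using hk)
    have hct : ∀ k : ℕ, c + 1 + k ≠ 0 := fun k => by
      rw [add_assoc, add_comm 1, ← Nat.cast_succ]
      exact hc (k + 1)
    have hvt : IsAntisymmOn {r | r ∈ t} v := hv.mono fun r hr => List.mem_cons_of_mem _ hr
    -- `P_{pq} P_{pr} = P_{pr} P_{qr}`, and `P_{qr}` acts on `v` as `-1`
    have hswap : ∀ f : ι → Fin n, ∀ r ∈ t,
        v ((f ∘ Equiv.swap p q) ∘ Equiv.swap p r) = -v (f ∘ Equiv.swap p r) := by
      intro f r hr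
      have hqr : q ≠ r := fun h => hqt (h ▸ hr)
      rw [comp_swap_comp_swap hpq (fun h => hpt (h ▸ hr)) hqr]
      exact hv q List.mem_cons_self r (List.mem_cons_of_mem _ hr) hqr _
    simp only [List.map_cons, List.prod_cons, ← Matrix.mulVec_mulVec, ih ht hpt hAt hct hvt,
      lift2_Rm_mulVec hpq, hAq, List.toFinset_cons,
      Finset.sum_insert (List.mem_toFinset.not.mpr hqt)]
    funext f
    rw [Finset.sum_congr rfl fun r hr => hswap f r (List.mem_toFinset.mp hr),
      Finset.sum_neg_distrib]
    -- the two sums merge because `(c + 1)⁻¹ (1 + c⁻¹) = c⁻¹`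
    field_simp
    ring

theorem list_prod_lift2_Rm_mulVec_eq_smul {p : ι} {qs : List ι} (hnd : qs.Nodup) (hp : p ∉ qs)
    {A : ι → ℂ} {c : ℂ} (hA : ∀ (k : ℕ) (hk : k < qs.length), A qs[k] = c + k)
    (hc : ∀ k : ℕ, c + k ≠ 0) {v : (ι → Fin n) → ℂ} (hv : IsAntisymmOn {q | q ∈ qs} v)
    (hsupp : ∀ f, v f ≠ 0 → ∃ q ∈ qs, f q = f p) :
    ((qs.map fun q => lift2 p q (Rm n (A q))).prod).mulVec v = ((c - 1) / c) • v := by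
  rw [list_prod_lift2_Rm_mulVec hnd hp hA hc hv]
  funext f
  rw [sum_comp_swap_eq_self (List.mem_toFinset.not.mpr hp) (by rwa [List.coe_toFinset])
    (by simpa using hsupp), Pi.smul_apply, smul_eq_mul]
  field_simp [by simpa using hc 0]

end Fusion

section Antisymmetrizer

variable {n : ℕ}

theorem antisym_apply {k : ℕ} (t u : Fin k → Fin n) :
    antisym n k t u
      = (k.factorial : ℂ)⁻¹ * ∑ σ : Equiv.Perm (Fin k), (Equiv.Perm.sign σ : ℂ) *
          if t ∘ σ = u then 1 else 0 := by
  simp [antisym, permMat, Matrix.sum_apply]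

theorem antisym_comp_perm {k : ℕ} (π : Equiv.Perm (Fin k)) (t u : Fin k → Fin n) :
    antisym n k (t ∘ π) u = Equiv.Perm.sign π * antisym n k t u := by
  have hsq : (Equiv.Perm.sign π : ℂ) * Equiv.Perm.sign π = 1 := by
    rw [← Int.cast_mul, ← Units.val_mul, Int.units_mul_self]
    simp
  rw [antisym_apply, antisym_apply]
  conv_rhs => rw [← Equiv.sum_comp (Equiv.mulLeft π)]
  rw [Finset.mul_sum, Finset.mul_sum, Finset.mul_sum]
  refine Finset.sum_congr rfl fun σ _ => ?_
  simp only [Equiv.coe_mulLeft, Equiv.Perm.sign_mul, Units.val_mul, Int.cast_mul,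
    Equiv.Perm.coe_mul, Function.comp_assoc]
  by_cases h : t ∘ π ∘ σ = u
  · simp only [h, if_true]
    linear_combination -(k.factorial : ℂ)⁻¹ * (Equiv.Perm.sign σ : ℂ) * hsq
  · simp [h]

theorem exists_perm_of_antisym_apply_ne_zero {k : ℕ} {t u : Fin k → Fin n}
    (h : antisym n k t u ≠ 0) : ∃ σ : Equiv.Perm (Fin k), t ∘ σ = u := by
  by_contra hσ
  push Not at hσ
  simp [antisym_apply, hσ] at h

variable {m : ℕ} {ν : Fin m → ℕ}

theorem isAntisymmOn_phiSeg (hn : 0 < n) (b : Fin m) :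
    IsAntisymmOn {q : Pos m ν | q.1 = b} (phiSeg n m hn ν) := by
  rintro ⟨b₁, j⟩ hb₁ ⟨b₂, j'⟩ hb₂ hjj' g
  change b₁ = b at hb₁
  change b₂ = b at hb₂
  subst b₁ b₂
  have hjj : j ≠ j' := fun h => hjj' (h ▸ rfl)
  have hinj := sigma_mk_injective (β := fun a : Fin m => Fin (ν a)) (i := b)
  have hfactor : ∀ a, a ≠ b → ∀ i : Fin (ν a),
      (g ∘ Equiv.swap ⟨b, j⟩ ⟨b, j'⟩) ⟨a, i⟩ = g ⟨a, i⟩ := fun a hab i => by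
    rw [Function.comp_apply, Equiv.swap_apply_of_ne_of_ne] <;> simp [hab]
  have hseg : (fun i => (g ∘ Equiv.swap ⟨b, j⟩ ⟨b, j'⟩) ⟨b, i⟩)
      = (fun i => g ⟨b, i⟩) ∘ Equiv.swap j j' := by
    funext i
    simp only [Function.comp_apply, hinj.swap_apply]
  simp only [phiSeg, ← Finset.mul_prod_erase _ _ (Finset.mem_univ b), hseg, antisym_comp_perm,
    Equiv.Perm.sign_swap hjj]
  rw [Finset.prod_congr rfl fun a ha => by rw [funext (hfactor a (Finset.ne_of_mem_erase ha))]]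
  simp

theorem phiSeg_support (hn : 0 < n) {g : Pos m ν → Fin n} (hg : phiSeg n m hn ν g ≠ 0)
    {a b : Fin m} (hab : ν a ≤ ν b) (i : Fin (ν a)) : ∃ j, g ⟨b, j⟩ = g ⟨a, i⟩ := by
  have hfac := Finset.prod_ne_zero_iff.mp hg
  obtain ⟨σa, hσa⟩ := exists_perm_of_antisym_apply_ne_zero (hfac a (Finset.mem_univ a))
  obtain ⟨σb, hσb⟩ := exists_perm_of_antisym_apply_ne_zero (hfac b (Finset.mem_univ b))
  set x := σa.symm i
  refine ⟨σb ⟨x, x.2.trans_le hab⟩, ?_⟩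
  have ha := congrFun hσa x
  have hb := congrFun hσb ⟨x, x.2.trans_le hab⟩
  simp only [Function.comp_apply, x, Equiv.apply_symm_apply] at ha hb
  rw [ha, hb]

end Antisymmetrizer

section Segments

variable {n m : ℕ} {ν : Fin m → ℕ}

theorem list_prod_lift2_Rm_mulVec_phiSeg (hn : 0 < n) {p : Pos m ν} {b : Fin m} (hpb : p.1 ≠ b)
    (hle : ν p.1 ≤ ν b) {js : List (Fin (ν b))} (hnd : js.Nodup) (hjs : ∀ j, j ∈ js)
    {A : Pos m ν → ℂ} {c : ℂ} (hA : ∀ (k : ℕ) (hk : k < js.length), A ⟨b, js[k]⟩ = c + k)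
    (hc : ∀ k : ℕ, c + k ≠ 0) :
    ((js.map fun j => lift2 p ⟨b, j⟩ (Rm n (A ⟨b, j⟩))).prod).mulVec (phiSeg n m hn ν)
      = ((c - 1) / c) • phiSeg n m hn ν := by
  have hmem : ∀ {q : Pos m ν}, q ∈ js.map (Sigma.mk b) ↔ q.1 = b := by
    rintro ⟨a, i⟩
    constructor
    · intro h
      obtain ⟨j, -, hj⟩ := List.mem_map.mp h
      exact congrArg Sigma.fst hj.symm
    · rintro (rfl : a = b)
      exact List.mem_map.mpr ⟨i, hjs i, rfl⟩
  have h := list_prod_lift2_Rm_mulVec_eq_smul (p := p) (qs := js.map (Sigma.mk b)) (A := A)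
    (hnd.map sigma_mk_injective) (fun h => hpb (hmem.mp h))
    (fun k hk => by simpa using hA k (by simpa using hk)) hc
    ((isAntisymmOn_phiSeg hn b).mono fun q hq => hmem.mp hq) ?_
  · simpa [List.map_map, Function.comp_def] using h
  · intro g hg
    obtain ⟨j, hj⟩ := phiSeg_support hn hg hle p.2
    exact ⟨⟨b, j⟩, hmem.mpr rfl, hj⟩

end Segments

section Blocks

variable (n : ℕ) {m : ℕ} (ν : Fin m → ℕ) (μ ρ : Fin m → ℂ)

def Rfactor (p q : Pos m ν) : TMat (Pos m ν) n :=
  lift2 p q (Rm n (xPos m ν μ ρ q - xPos m ν μ ρ p))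

/-- The block `D_{ab}`: the factors of `B(μ)` coupling segments `a` and `b`, in their order in
`B(μ)`. -/
def Bblock (a b : Fin m) : TMat (Pos m ν) n :=
  ((List.finRange (ν a)).map fun i =>
    ((List.finRange (ν b)).reverse.map fun j => Rfactor n ν μ ρ ⟨a, i⟩ ⟨b, j⟩).prod).prod

variable {n ν}

theorem commute_Rfactor {p q r s : Pos m ν} (hpq : p ≠ q) (hrs : r ≠ s) (hpr : p ≠ r) (hps : p ≠ s)
    (hqr : q ≠ r) (hqs : q ≠ s) : Commute (Rfactor n ν μ ρ p q) (Rfactor n ν μ ρ r s) :=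
  commute_lift2_Rm hpq hrs hpr hps hqr hqs _ _

theorem Bop_eq_prod_Bblock :
    Bop n m ν μ ρ = ((List.finRange m).map fun a =>
      (((List.finRange m).filter fun b => decide (a < b)).map (Bblock n ν μ ρ a)).prod).prod := by
  simp only [Bop, pairsB, posList, List.flatMap_assoc, List.prod_map_flatMap, List.flatMap_map,
    List.map_map, Function.comp_def]
  refine congrArg _ (List.map_congr_left fun a _ => ?_)
  refine List.prod_map_prod_map_comm _ ((List.finRange m).filter fun b => decide (a < b))
    (fun i b => ((List.finRange (ν b)).reverse.map fun j => Rfactor n ν μ ρ ⟨a, i⟩ ⟨b, j⟩).prod)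
    (List.nodup_finRange _) ((List.nodup_finRange _).filter _)
    fun i _ i' _ b hb b' hb' hii' hbb' => ?_
  have hab : a < b := by simpa using (List.mem_filter.mp hb).2
  have hab' : a < b' := by simpa using (List.mem_filter.mp hb').2
  refine Commute.list_prod_left _ _ fun x hx => Commute.list_prod_right _ _ fun y hy => ?_
  obtain ⟨j, -, rfl⟩ := List.mem_map.mp hx
  obtain ⟨j', -, rfl⟩ := List.mem_map.mp hy
  exact commute_Rfactor μ ρ (by simp [hab.ne]) (by simp [hab'.ne]) (by simp [hii'])
    (by simp [hab'.ne]) (by simp [hab.ne']) (by simp [hbb'])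

end Blocks

section Eigenvalues

variable {n m : ℕ} {ν : Fin m → ℕ} (μ ρ : Fin m → ℂ)

theorem xPos_sub_xPos (a b : Fin m) (i : Fin (ν a)) (j : Fin (ν b)) :
    xPos m ν μ ρ ⟨b, j⟩ - xPos m ν μ ρ ⟨a, i⟩
      = (μ b + ρ b) - (μ a + ρ a) + ν b - ν a - (j : ℕ) + (i : ℕ) := by
  simp only [xPos]
  ring

theorem Bblock_mulVec_phiSeg_of_le (hn : 0 < n) {a b : Fin m} (hab : a ≠ b) (hle : ν a ≤ ν b)
    (hW : ∀ z : ℤ, (μ b + ρ b) - (μ a + ρ a) + z ≠ 0) :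
    (Bblock n ν μ ρ a b).mulVec (phiSeg n m hn ν)
      = (((μ b + ρ b) - (μ a + ρ a) - ν a) / ((μ b + ρ b) - (μ a + ρ a))) • phiSeg n m hn ν := by
  set W := (μ b + ρ b) - (μ a + ρ a)
  set g : ℕ → ℂ := fun k => W - ν a + k
  have hg : ∀ k, g k ≠ 0 := fun k h => hW (k - ν a) (by push_cast; linear_combination h)
  rw [Bblock, Matrix.list_prod_mulVec_eq_smul _ _ _ (fun i : Fin (ν a) => g i / g (i + 1))
    fun i _ => ?_]
  · rw [← Fin.prod_univ_def, Fin.prod_univ_eq_prod_range (fun i => g i / g (i + 1)),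
      Finset.prod_range_div_of_ne_zero' g hg]
    simp [g]
  refine (list_prod_lift2_Rm_mulVec_phiSeg hn (p := ⟨a, i⟩) hab hle
    (List.nodup_reverse.mpr (List.nodup_finRange _)) (by simp)
    (A := fun q => xPos m ν μ ρ q - xPos m ν μ ρ ⟨a, i⟩) (c := g (i + 1)) (fun k hk => ?_)
    (fun k => by simpa [g, add_assoc] using hg (i + 1 + k))).trans ?_
  · simp only [List.length_reverse, List.length_finRange] at hk
    simp only [List.getElem_reverse, List.getElem_finRange, xPos_sub_xPos, List.length_finRange,
      Fin.cast_mk, g]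
    rw [Nat.cast_sub (by omega), Nat.cast_sub (by omega)]
    push_cast
    ring
  · congr 1
    simp only [g]
    push_cast
    ring

theorem Bblock_mulVec_phiSeg_of_ge (hn : 0 < n) {a b : Fin m} (hab : a ≠ b) (hge : ν b ≤ ν a)
    (hW : ∀ z : ℤ, (μ b + ρ b) - (μ a + ρ a) + z ≠ 0) :
    (Bblock n ν μ ρ a b).mulVec (phiSeg n m hn ν)
      = (((μ b + ρ b) - (μ a + ρ a) - ν a) / ((μ b + ρ b) - (μ a + ρ a) - ν a + ν b))
        • phiSeg n m hn ν := by
  set W := (μ b + ρ b) - (μ a + ρ a)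
  set g : ℕ → ℂ := fun k => W + ν b - ν a - k
  have hg : ∀ k, g k ≠ 0 := fun k hk => hW (ν b - ν a - k) (by push_cast; linear_combination hk)
  rw [Bblock, List.prod_map_prod_map_comm _ _ (fun i j => Rfactor n ν μ ρ ⟨a, i⟩ ⟨b, j⟩)
    (List.nodup_finRange _) (List.nodup_reverse.mpr (List.nodup_finRange _))
    fun i _ i' _ j _ j' _ hii' hjj' => commute_Rfactor μ ρ (by simp [hab]) (by simp [hab])
      (by simp [hii']) (by simp [hab]) (by simp [hab.symm]) (by simp [hjj']),
    Matrix.list_prod_mulVec_eq_smul _ _ _ (fun j : Fin (ν b) => g (j + 1) / g j) fun j _ => ?_]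
  · rw [List.map_reverse, List.prod_reverse, ← Fin.prod_univ_def,
      Fin.prod_univ_eq_prod_range (fun j => g (j + 1) / g j), Finset.prod_range_div_of_ne_zero g hg]
    congr 1
    simp only [g]
    ring
  simp only [Rfactor, lift2_Rm_comm (⟨a, _⟩ : Pos m ν)]
  refine (list_prod_lift2_Rm_mulVec_phiSeg hn (p := ⟨b, j⟩) hab.symm hge (List.nodup_finRange _)
    (by simp) (A := fun q => xPos m ν μ ρ ⟨b, j⟩ - xPos m ν μ ρ q) (c := g j) (fun k hk => ?_)
    (fun k hk => hW (ν b - ν a - j + k) (by push_cast; linear_combination hk))).trans ?_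
  · simp only [List.getElem_finRange, xPos_sub_xPos, Fin.cast_mk, g]
    ring
  · congr 1
    simp only [g]
    push_cast
    ring

end Eigenvalues

section EigenFactor

variable {n m : ℕ} (ν : Fin m → ℕ) (μ ρ : Fin m → ℂ)

/-- The factor `c_{ab}` of the eigenvalue, for an arbitrary shift `ρ`. -/
def eigenFactor (a b : Fin m) : ℂ :=
  if ν a ≤ ν b then
    ((μ a + (ν a : ℂ)) - (μ b + (ν b : ℂ)) + ρ a - ρ b + (ν b : ℂ)) / (μ a - μ b + ρ a - ρ b)
  else
    ((μ a + (ν a : ℂ)) - (μ b + (ν b : ℂ)) + ρ a - ρ b + (ν b : ℂ)) /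
      ((μ a + (ν a : ℂ)) - (μ b + (ν b : ℂ)) + ρ a - ρ b)

variable {ν}

theorem Bblock_mulVec_phiSeg (hn : 0 < n) {a b : Fin m} (hab : a ≠ b)
    (hW : ∀ z : ℤ, (μ b + ρ b) - (μ a + ρ a) + z ≠ 0) :
    (Bblock n ν μ ρ a b).mulVec (phiSeg n m hn ν) = eigenFactor ν μ ρ a b • phiSeg n m hn ν := by
  rw [eigenFactor]
  split_ifs with hle
  · rw [Bblock_mulVec_phiSeg_of_le μ ρ hn hab hle hW, ← neg_div_neg_eq]
    ring_nf
  · rw [Bblock_mulVec_phiSeg_of_ge μ ρ hn hab (by omega) hW, ← neg_div_neg_eq]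
    ring_nf

theorem Bop_mulVec_phiSeg (hn : 0 < n)
    (hμρ : ∀ a b, a ≠ b → ∀ z : ℤ, μ a + ρ a - (μ b + ρ b) ≠ z) :
    (Bop n m ν μ ρ).mulVec (phiSeg n m hn ν)
      = (∏ a : Fin m, ∏ b : Fin m, if a < b then eigenFactor ν μ ρ a b else 1)
        • phiSeg n m hn ν := by
  have hblock : ∀ a b, a < b →
      (Bblock n ν μ ρ a b).mulVec (phiSeg n m hn ν) = eigenFactor ν μ ρ a b • phiSeg n m hn ν :=
    fun a b hab => Bblock_mulVec_phiSeg μ ρ hn hab.ne fun z h =>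
      hμρ b a hab.ne' (-z) (by push_cast; linear_combination h)
  rw [Bop_eq_prod_Bblock, Matrix.list_prod_mulVec_eq_smul _ _ _ _ fun a _ =>
    Matrix.list_prod_mulVec_eq_smul _ _ _ _ fun b hb => hblock a b (by simpa using hb)]
  simp only [Fin.prod_univ_def, List.prod_map_ite, List.prod_map_one, mul_one]

end EigenFactor

/-- `φ_{ν₁} ⊗ ⋯ ⊗ φ_{ν_m}` is an eigenvector of `B(μ)`, with the eigenvalue
`∏_{a<b} c_{ab}` where, writing `λ_a = μ_a + ν_a`,
`c_{ab} = (λ_a−λ_b+ρ_a−ρ_b+ν_b)/(μ_a−μ_b+ρ_a−ρ_b)` if `ν_a ≤ ν_b` and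
`c_{ab} = (λ_a−λ_b+ρ_a−ρ_b+ν_b)/(λ_a−λ_b+ρ_a−ρ_b)` if `ν_a ≥ ν_b`. -/
theorem stmt11 (n m : ℕ) (hn : 2 ≤ n) (ν : Fin m → ℕ) (μ : Fin m → ℂ)
    (hμ : ∀ a b, a ≠ b → ∀ z : ℤ, μ a - μ b ≠ (z : ℂ)) :
    (Bop n m ν μ (rhoGL m)).mulVec (phiSeg n m (by omega) ν)
  = (∏ a : Fin m, ∏ b : Fin m, if a < b then
      (if ν a ≤ ν b then
        ((μ a + (ν a : ℂ)) - (μ b + (ν b : ℂ)) + rhoGL m a - rhoGL m b + (ν b : ℂ)) /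
          (μ a - μ b + rhoGL m a - rhoGL m b)
      else
        ((μ a + (ν a : ℂ)) - (μ b + (ν b : ℂ)) + rhoGL m a - rhoGL m b + (ν b : ℂ)) /
          ((μ a + (ν a : ℂ)) - (μ b + (ν b : ℂ)) + rhoGL m a - rhoGL m b))
      else 1) • phiSeg n m (by omega) ν :=
  Bop_mulVec_phiSeg μ (rhoGL m) _ fun a b hab z h =>
    hμ a b hab (z + a - b) (by simp only [rhoGL] at h; push_cast; linear_combination h)
end
end
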